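/- Let H = (ℂ^×)^n be a complex torus and τ an involutive automorphism of H. Let H^{-τ} = {h ∈ H : τ(h) = h⁻¹}. Then the component group H^{-τ}/(H^{-τ})⁰ is an elementary abelian 2-group. -/

import Mathlib

/-!
The torus `H` is connected, so the continuous homomorphism `h ↦ h τ(h)⁻¹` maps it into the
identity component of `H^{-τ}` (it lands in `H^{-τ}` because `τ` is an involution and `H` is
commutative). On `x ∈ H^{-τ}` this map is `x ↦ x τ(x)⁻¹ = x²`.
-/

/-- For an involutive automorphism `τ` of the complex torus `H = (ℂˣ)^n`, the subgroup
`H^{-τ} = {h : τ(h) = h⁻¹}`. -/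
def negFixedSubgroup (n : ℕ) (τ : (Fin n → ℂˣ) ≃* (Fin n → ℂˣ)) :
    Subgroup (Fin n → ℂˣ) where
  carrier := {h | τ h = h⁻¹}
  mul_mem' := by
    intro a b ha hb
    show τ (a * b) = (a * b)⁻¹
    rw [map_mul, ha, hb, ← mul_inv]
  one_mem' := by
    show τ 1 = 1⁻¹
    simp
  inv_mem' := by
    intro a ha
    show τ a⁻¹ = a⁻¹⁻¹
    rw [map_inv, ha, inv_inv]

theorem MonoidHom.range_le_connectedComponentOfOne {G K : Type*} [Group G] [TopologicalSpace G]
    [ConnectedSpace G] [Group K] [TopologicalSpace K] [IsTopologicalGroup K] (φ : G →* K)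
    (hφ : Continuous φ) : φ.range ≤ Subgroup.connectedComponentOfOne K := by
  rintro _ ⟨g, rfl⟩
  have hg : g ∈ connectedComponent (1 : G) := by
    simp [PreconnectedSpace.connectedComponent_eq_univ]
  simpa [Subgroup.connectedComponentOfOne] using hφ.mapsTo_connectedComponent 1 hg

namespace negFixedSubgroup

variable {n : ℕ} {τ : (Fin n → ℂˣ) ≃* (Fin n → ℂˣ)}

theorem mul_inv_apply_mem (hτ2 : ∀ h, τ (τ h) = h) (h : Fin n → ℂˣ) :
    h * (τ h)⁻¹ ∈ negFixedSubgroup n τ := by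
  show τ (h * (τ h)⁻¹) = (h * (τ h)⁻¹)⁻¹
  rw [map_mul, map_inv, hτ2, mul_inv, inv_inv, mul_comm]

def proj (hτ2 : ∀ h, τ (τ h) = h) : (Fin n → ℂˣ) →* negFixedSubgroup n τ :=
  (MonoidHom.id _ / τ.toMonoidHom).codRestrict _ (mul_inv_apply_mem hτ2)

theorem continuous_proj (hτ2 : ∀ h, τ (τ h) = h) (hc : Continuous τ) :
    Continuous (proj hτ2) :=
  (continuous_id.mul hc.inv).subtype_mk _

theorem proj_coe (hτ2 : ∀ h, τ (τ h) = h) (x : negFixedSubgroup n τ) :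
    proj hτ2 x = x ^ 2 := by
  have hx : τ (x : Fin n → ℂˣ) = (x : Fin n → ℂˣ)⁻¹ := x.2
  ext1
  simp [proj, hx, pow_two]

end negFixedSubgroup

theorem negFixed_component_group_elementary_two_general (n : ℕ)
    (τ : (Fin n → ℂˣ) ≃* (Fin n → ℂˣ))
    (hc : Continuous τ)
    (hτ2 : ∀ h, τ (τ h) = h) :
    ∀ x : negFixedSubgroup n τ,
      x ^ 2 ∈ Subgroup.connectedComponentOfOne (negFixedSubgroup n τ) := by
  intro x
  rw [← negFixedSubgroup.proj_coe hτ2 x]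
  exact (negFixedSubgroup.proj hτ2).range_le_connectedComponentOfOne
    (negFixedSubgroup.continuous_proj hτ2 hc) ⟨x, rfl⟩

/-- Let `H = (ℂˣ)^n` be a complex torus and `τ` an involutive (continuous) automorphism
of `H`.  Then the component group `H^{-τ}/(H^{-τ})⁰` of `H^{-τ} = {h : τ(h) = h⁻¹}` is an
elementary abelian 2-group: the square of every element of `H^{-τ}` lies in the identity
component of `H^{-τ}`. -/
theorem negFixed_component_group_elementary_two (n : ℕ)
    (τ : (Fin n → ℂˣ) ≃* (Fin n → ℂˣ))
    (hc : Continuous τ) (hc' : Continuous τ.symm)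
    (hτ2 : ∀ h, τ (τ h) = h) :
    ∀ x : negFixedSubgroup n τ,
      x ^ 2 ∈ Subgroup.connectedComponentOfOne (negFixedSubgroup n τ) :=
  negFixed_component_group_elementary_two_general n τ hc hτ2
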